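/- arXiv:1501.00912 — 5 statements merged into one kernel-verified Lean document; each statement's English description precedes it below -/
import Mathlib

section
/- Let Y be a semilattice (a commutative band). Then the free idempotent generated semigroup IG(Y) is abundant: every R*-class and every L*-class of IG(Y) contains an idempotent. -/
/-! Common definitions: free idempotent generated semigroups over bands,
generalised Green's relations, and abundancy notions. -/

/-- `(e, f)` is a *basic pair* if `ef ∈ {e,f}` or `fe ∈ {e,f}`. -/
def basicPair {B : Type*} [Mul B] (e f : B) : Prop :=
  e * f = e ∨ e * f = f ∨ f * e = e ∨ f * e = f

/-- The defining congruence of the free idempotent generated semigroup `IG B`: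
the congruence on the free semigroup on `{ē : e ∈ B}` generated by the relations
`ē f̄ = (ef)‾` for basic pairs `(e, f)`. -/
def igCon (B : Type*) [Semigroup B] : Con (FreeSemigroup B) :=
  conGen fun w₁ w₂ => ∃ e f : B, basicPair e f ∧
    w₁ = FreeSemigroup.of e * FreeSemigroup.of f ∧ w₂ = FreeSemigroup.of (e * f)

/-- The free idempotent generated semigroup over a band `B`. -/
abbrev IG (B : Type*) [Semigroup B] := (igCon B).Quotient

/-- The canonical generator `ē` of `IG B`. -/
def igOf {B : Type*} [Semigroup B] (e : B) : IG B :=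
  ((FreeSemigroup.of e : FreeSemigroup B) : (igCon B).Quotient)

/-- `prodSeq x a b = x a * x (a+1) * ⋯ * x b` (it is `x a` when `b ≤ a`). -/
def prodSeq {M : Type*} [Mul M] (x : ℕ → M) (a b : ℕ) : M :=
  (List.range (b - a)).foldl (fun acc i => acc * x (a + i + 1)) (x a)

/-- The word `x̄_a x̄_{a+1} ⋯ x̄_b` in the free semigroup on `{ē : e ∈ B}`. -/
def freeWord {B : Type*} (x : ℕ → B) (a b : ℕ) : FreeSemigroup B :=
  prodSeq (fun i => FreeSemigroup.of (x i)) a b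

/-- The element `x̄_a x̄_{a+1} ⋯ x̄_b` of `IG B`. -/
def igWord {B : Type*} [Semigroup B] (x : ℕ → B) (a b : ℕ) : IG B :=
  ((freeWord x a b : FreeSemigroup B) : (igCon B).Quotient)

/-- Green's relation `𝓡`: `a 𝓡 b` iff `a = b` or `as = b`, `bt = a` for some `s, t`. -/
def GreenR {S : Type*} [Semigroup S] (a b : S) : Prop :=
  a = b ∨ ∃ s t : S, a * s = b ∧ b * t = a

/-- Green's relation `𝓛`: `a 𝓛 b` iff `a = b` or `sa = b`, `tb = a` for some `s, t`. -/
def GreenL {S : Type*} [Semigroup S] (a b : S) : Prop :=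
  a = b ∨ ∃ s t : S, s * a = b ∧ t * b = a

/-- `a 𝓡* b` iff for all `x, y ∈ S¹`, `xa = ya ↔ xb = yb`. -/
def RStar {S : Type*} [Semigroup S] (a b : S) : Prop :=
  ∀ x y : WithOne S,
    x * (a : WithOne S) = y * (a : WithOne S) ↔ x * (b : WithOne S) = y * (b : WithOne S)

/-- `a 𝓛* b` iff for all `x, y ∈ S¹`, `ax = ay ↔ bx = by`. -/
def LStar {S : Type*} [Semigroup S] (a b : S) : Prop :=
  ∀ x y : WithOne S,
    (a : WithOne S) * x = (a : WithOne S) * y ↔ (b : WithOne S) * x = (b : WithOne S) * y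

/-- `a 𝓡̃ b` iff for every idempotent `e`, `ea = a ↔ eb = b`. -/
def RTilde {S : Type*} [Semigroup S] (a b : S) : Prop :=
  ∀ e : S, IsIdempotentElem e → (e * a = a ↔ e * b = b)

/-- `a 𝓛̃ b` iff for every idempotent `e`, `ae = a ↔ be = b`. -/
def LTilde {S : Type*} [Semigroup S] (a b : S) : Prop :=
  ∀ e : S, IsIdempotentElem e → (a * e = a ↔ b * e = b)

/-- A semigroup is *abundant* if every `𝓡*`-class and every `𝓛*`-class
contains an idempotent. -/
def Abundant (S : Type*) [Semigroup S] : Prop :=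
  ∀ a : S, (∃ e : S, IsIdempotentElem e ∧ RStar a e) ∧
    (∃ e : S, IsIdempotentElem e ∧ LStar a e)

/-- A semigroup is *weakly abundant* if every `𝓡̃`-class and every `𝓛̃`-class
contains an idempotent. -/
def WeaklyAbundant (S : Type*) [Semigroup S] : Prop :=
  ∀ a : S, (∃ e : S, IsIdempotentElem e ∧ RTilde a e) ∧
    (∃ e : S, IsIdempotentElem e ∧ LTilde a e)

/-- On a band, `x` and `y` are `𝒟`-equivalent iff `xyx = x` and `yxy = y`. -/
def dEquiv {B : Type*} [Mul B] (x y : B) : Prop :=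
  x * y * x = x ∧ y * x * y = y

/-- On a band, `x` and `y` are `𝒥`-incomparable iff `xyx ≠ x` and `yxy ≠ y`. -/
def jIncomp {B : Type*} [Mul B] (x y : B) : Prop :=
  x * y * x ≠ x ∧ y * x * y ≠ y

/-- One step of the reduction system induced by the presentation of `IG B`:
replace a factor `ē f̄`, with `(e,f)` a basic pair, by `(ef)‾`. -/
def RedStep {B : Type*} [Semigroup B] (w w' : FreeSemigroup B) : Prop :=
  ∃ (p q : List B) (e f : B), basicPair e f ∧
    w.head :: w.tail = p ++ e :: f :: q ∧
    w'.head :: w'.tail = p ++ (e * f) :: q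

/-- A word is in *normal form* (irreducible) if no reduction step applies. -/
def IsNF {B : Type*} [Semigroup B] (w : FreeSemigroup B) : Prop :=
  ∀ w', ¬ RedStep w w'

/-- `x̄₁ ⋯ x̄ₙ` (letters `x 1, …, x n`) is in *almost normal form* witnessed by
block boundaries `idx 0 = 0 < idx 1 < ⋯ < idx r = n`: within each block all
letters are `𝒟`-equivalent, and letters in adjacent blocks are incomparable. -/
def AlmostNF {B : Type*} [Mul B] (x : ℕ → B) (n r : ℕ) (idx : ℕ → ℕ) : Prop :=
  1 ≤ r ∧ idx 0 = 0 ∧ idx r = n ∧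
  (∀ k < r, idx k < idx (k + 1)) ∧
  (∀ k < r, ∀ p q : ℕ, idx k < p → p ≤ idx (k + 1) → idx k < q → q ≤ idx (k + 1) →
    dEquiv (x p) (x q)) ∧
  (∀ k : ℕ, k + 1 < r → ∀ p q : ℕ, idx k < p → p ≤ idx (k + 1) →
    idx (k + 1) < q → q ≤ idx (k + 2) → jIncomp (x p) (x q))

/-- Condition (P) for `IG B`. -/
def CondP (B : Type*) [Semigroup B] : Prop :=
  ∀ (n m r : ℕ) (u v : ℕ → B) (iu iv : ℕ → ℕ),
    AlmostNF u n r iu → AlmostNF v m r iv →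
    igWord u 1 n = igWord v 1 m →
    ((∀ s : ℕ, 1 ≤ s → s ≤ r →
        (u (iu s) * v (iv s) = u (iu s) ∧ v (iv s) * u (iu s) = v (iv s)) →
        igWord u 1 (iu s) = igWord v 1 (iv s)) ∧
      (∀ t : ℕ, t + 1 ≤ r →
        (u (iu t + 1) * v (iv t + 1) = v (iv t + 1) ∧
          v (iv t + 1) * u (iu t + 1) = u (iu t + 1)) →
        igWord u (iu t + 1) n = igWord v (iv t + 1) m))

/-- A normal band is *pliant* if for every `𝒟`-class `D` there is `c ∈ D` with
`u e u = c` for every `e ∈ D` and every `u` strictly `𝒥`-above `D`. -/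
def Pliant (B : Type*) [Mul B] : Prop :=
  ∀ d : B, ∃ c : B, dEquiv c d ∧
    ∀ e u : B, dEquiv e d → (e * u * e = e ∧ u * e * u ≠ u) → u * e * u = c

/-! In a semilattice the basic pairs are exactly the comparable pairs, so every element of `IG Y`
has a unique normal form: a word in which no two adjacent letters are comparable. It is computed
by letting each generator `ē` act on such words by `reduceCons e`, which merges `e` into the
word from the left.

Let `c :: t` be the normal form of `a`. Then `c̄ a = a`. Multiplying a normal form whose last
letter `d` lies below `c` by `t` only absorbs into `d` an initial segment of `t` lying above `d`;
since no two adjacent letters of `c :: t` are comparable, this segment is determined by the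
product, so the multiplication can be undone. Hence `x a = y a` forces `x c̄ = y c̄`, i.e.
`a 𝓡* c̄`. Reversing words is an anti-automorphism of `IG Y` fixing the generators, which turns
this into the statement for `𝓛*`. -/

section Words

variable {Y : Type*} [Semigroup Y]

def Comparable (e f : Y) : Prop := e * f = e ∨ e * f = f

def IsReducedWord (l : List Y) : Prop := l.IsChain fun e f => ¬ Comparable e f

open Classical in
noncomputable def reduceCons (e : Y) : List Y → List Y
  | [] => [e]
  | d :: t => if Comparable e d then reduceCons (e * d) t else e :: d :: t

@[simp]
theorem reduceCons_nil (e : Y) : reduceCons e [] = [e] := rfl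

theorem reduceCons_cons_of_comparable {e d : Y} (h : Comparable e d) (t : List Y) :
    reduceCons e (d :: t) = reduceCons (e * d) t := by
  classical simp [reduceCons, h]

theorem reduceCons_cons_of_not_comparable {e d : Y} (h : ¬ Comparable e d) (t : List Y) :
    reduceCons e (d :: t) = e :: d :: t := by
  classical simp [reduceCons, h]

theorem IsReducedWord.reduceCons_eq {c : Y} {t : List Y} (h : IsReducedWord (c :: t)) :
    reduceCons c t = c :: t := by
  cases t with
  | nil => rfl
  | cons d t => exact reduceCons_cons_of_not_comparable (List.isChain_cons_cons.1 h).1 t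

theorem isReducedWord_reduceCons {t : List Y} (ht : IsReducedWord t) (e : Y) :
    IsReducedWord (reduceCons e t) := by
  induction t generalizing e with
  | nil => exact List.isChain_singleton e
  | cons d t ih =>
    by_cases h : Comparable e d
    · rw [reduceCons_cons_of_comparable h]
      exact ih ht.tail _
    · rw [reduceCons_cons_of_not_comparable h]
      exact ht.cons_cons h

theorem IsReducedWord.reduceCons_reduceCons {t : List Y} (ht : IsReducedWord t) {e d : Y}
    (hed : Comparable e d) : reduceCons e (reduceCons d t) = reduceCons (e * d) t := by
  induction t generalizing d with
  | nil => rw [reduceCons_nil, reduceCons_cons_of_comparable hed, reduceCons_nil]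
  | cons f t ih =>
    by_cases hdf : Comparable d f
    · rw [reduceCons_cons_of_comparable hdf]
      rcases hdf with hdf | hdf
      · have hedf : Comparable (e * d) f := Or.inl (by rw [mul_assoc, hdf])
        rw [hdf, reduceCons_cons_of_comparable hedf, mul_assoc, hdf]
        exact ih ht.tail hed
      · rw [hdf, ht.reduceCons_eq]
        rcases hed with hed | hed
        · rw [hed]
        · have hef : e * f = f := by rw [← hdf, ← mul_assoc, hed]
          rw [hed, reduceCons_cons_of_comparable (Or.inr hef), hef,
            reduceCons_cons_of_comparable (Or.inr hdf), hdf]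
    · rw [reduceCons_cons_of_not_comparable hdf, reduceCons_cons_of_comparable hed]

theorem foldr_reduceCons_of_isReducedWord {p : List Y} {d : Y} (hp : IsReducedWord (p ++ [d]))
    (s : List Y) : p.foldr reduceCons (d :: s) = p ++ d :: s := by
  induction p with
  | nil => rfl
  | cons e p ih =>
    rw [List.foldr_cons, ih hp.tail]
    cases p with
    | nil => exact reduceCons_cons_of_not_comparable (List.isChain_cons_cons.1 hp).1 s
    | cons f p => exact reduceCons_cons_of_not_comparable (List.isChain_cons_cons.1 hp).1 _

end Words

section CommWords

variable {Y : Type*} [CommSemigroup Y]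

def EndsBelow (c : Y) (l : List Y) : Prop := ∃ l₀ d, l = l₀ ++ [d] ∧ d * c = d

theorem endsBelow_reduceCons {c : Y} {l : List Y} (hl : EndsBelow c l) (e : Y) :
    EndsBelow c (reduceCons e l) := by
  obtain ⟨l₀, d, rfl, hdc⟩ := hl
  induction l₀ generalizing e with
  | nil =>
    by_cases h : Comparable e d
    · rw [List.nil_append, reduceCons_cons_of_comparable h, reduceCons_nil]
      exact ⟨[], e * d, rfl, by rw [mul_assoc, hdc]⟩
    · rw [List.nil_append, reduceCons_cons_of_not_comparable h]
      exact ⟨[e], d, rfl, hdc⟩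
  | cons f l₀ ih =>
    by_cases h : Comparable e f
    · rw [List.cons_append, reduceCons_cons_of_comparable h]
      exact ih _
    · rw [List.cons_append, reduceCons_cons_of_not_comparable h]
      exact ⟨e :: f :: l₀, d, rfl, hdc⟩

theorem endsBelow_foldr_reduceCons {c : Y} {l : List Y} (hl : EndsBelow c l) (p : List Y) :
    EndsBelow c (p.foldr reduceCons l) := by
  induction p with
  | nil => exact hl
  | cons e p ih => exact endsBelow_reduceCons ih e

theorem comparable_of_mul_eq_left {d g : Y} (h : d * g = d) : Comparable g d :=
  Or.inr (by rw [mul_comm, h])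

theorem reduceCons_eq_cons_of_le {b d : Y} {t : List Y} (hbt : IsReducedWord (b :: t))
    (hdb : d * b = d) :
    ∃ u s, t = u ++ s ∧ reduceCons d t = d :: s ∧ ∀ g ∈ u, d * g = d := by
  induction t generalizing b with
  | nil => exact ⟨[], [], rfl, rfl, by simp⟩
  | cons g t ih =>
    have hbg : ¬ Comparable b g := (List.isChain_cons_cons.1 hbt).1
    by_cases hdg : Comparable d g
    -- `g ≤ d ≤ b` would make `b` and `g` comparable
    · have hdg : d * g = d := hdg.resolve_right fun hdg =>
        hbg (comparable_of_mul_eq_left (by rw [← hdg, mul_comm d g, mul_assoc, hdb]))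
      obtain ⟨u, s, rfl, hs, hu⟩ := ih hbt.tail hdg
      refine ⟨g :: u, s, rfl, ?_, ?_⟩
      · rw [reduceCons_cons_of_comparable (Or.inl hdg), hdg, hs]
      · simpa [hdg] using hu
    · exact ⟨[], g :: t, rfl, reduceCons_cons_of_not_comparable hdg t, by simp⟩

theorem foldr_reduceCons_eq_append {c d : Y} {t P : List Y} (hct : IsReducedWord (c :: t))
    (hP : IsReducedWord (P ++ [d])) (hdc : d * c = d) :
    ∃ u s, t = u ++ s ∧ (P ++ [d]).foldr reduceCons t = P ++ d :: s ∧
      ∀ g ∈ c :: u, d * g = d := by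
  obtain ⟨u, s, rfl, hs, hu⟩ := reduceCons_eq_cons_of_le hct hdc
  refine ⟨u, s, rfl, ?_, List.forall_mem_cons.2 ⟨hdc, hu⟩⟩
  rw [List.foldr_append, List.foldr_cons, List.foldr_nil, hs,
    foldr_reduceCons_of_isReducedWord hP]

theorem not_isReducedWord_append_singleton {d : Y} {l : List Y} (hl : l ≠ [])
    (hd : ∀ g ∈ l, d * g = d) : ¬ IsReducedWord (l ++ [d]) := fun hred =>
  (List.isChain_append.1 hred).2.2 (l.getLast hl) (List.getLast_mem_getLast? hl) d rfl
    (comparable_of_mul_eq_left (hd _ (List.getLast_mem hl)))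

theorem append_singleton_eq_of_append_eq {c dP dQ : Y} {u v s P Q : List Y}
    (hred : IsReducedWord (c :: (u ++ v))) (hd : ∀ g ∈ c :: (u ++ v), dQ * g = dQ)
    (h : P ++ dP :: (v ++ s) = Q ++ dQ :: s) : P ++ [dP] = Q ++ [dQ] := by
  have h' : P ++ [dP] ++ v = Q ++ [dQ] :=
    List.append_cancel_right (by simpa only [List.append_assoc, List.cons_append,
      List.nil_append] using h)
  obtain rfl | ⟨v₀, x, rfl⟩ := List.eq_nil_or_concat' v
  · simpa using h'
  · have hx : x = dQ := by
      simpa only [← List.append_assoc, List.getLast?_concat, Option.some.injEq] using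
        congrArg List.getLast? h'
    subst hx
    refine absurd ?_ (not_isReducedWord_append_singleton (List.cons_ne_nil c (u ++ v₀))
      fun g hg => hd g ?_)
    · simpa only [List.cons_append, List.append_assoc] using hred
    · simp only [List.mem_cons, List.mem_append] at hg ⊢
      tauto

theorem foldr_reduceCons_injective {c : Y} {t P Q : List Y} (hct : IsReducedWord (c :: t))
    (hP : IsReducedWord P) (hQ : IsReducedWord Q) (hPc : EndsBelow c P) (hQc : EndsBelow c Q)
    (h : P.foldr reduceCons t = Q.foldr reduceCons t) : P = Q := by
  obtain ⟨P, dP, rfl, hdP⟩ := hPc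
  obtain ⟨Q, dQ, rfl, hdQ⟩ := hQc
  obtain ⟨u, s, ht, hPs, hu⟩ := foldr_reduceCons_eq_append hct hP hdP
  obtain ⟨u', s', ht', hQs, hu'⟩ := foldr_reduceCons_eq_append hct hQ hdQ
  rw [hPs, hQs] at h
  rcases List.append_eq_append_iff.1 (ht.symm.trans ht') with ⟨v, rfl, rfl⟩ | ⟨v, rfl, rfl⟩
  · exact append_singleton_eq_of_append_eq (hct.prefix ⟨s', by rw [ht', List.cons_append]⟩)
      hu' h
  · exact (append_singleton_eq_of_append_eq (hct.prefix ⟨s, by rw [ht, List.cons_append]⟩) hu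
      h.symm).symm

end CommWords

theorem lStar_of_rStar_of_involutive {S : Type*} [Semigroup S] {f : S → S}
    (hf : Function.Involutive f) (hmul : ∀ a b, f (a * b) = f b * f a) {a b : S}
    (h : RStar (f a) (f b)) : LStar a b := by
  set g : WithOne S → WithOne S := WithOne.map f
  have hg : Function.Involutive g := by
    intro x
    induction x using WithOne.cases_on <;> simp [g, hf _]
  have hgmul : ∀ (s : S) (x : WithOne S), g (s * x) = g x * (f s : WithOne S) := by
    intro s x
    induction x using WithOne.cases_on <;> simp [g, ← WithOne.coe_mul, hmul]
  intro x y
  rw [← hg.injective.eq_iff, hgmul, hgmul, h, ← hgmul, ← hgmul, hg.injective.eq_iff]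

theorem basicPair_comm {B : Type*} [Mul B] {e f : B} : basicPair e f ↔ basicPair f e := by
  unfold basicPair
  tauto

namespace IG

section Semigroup

variable {Y : Type*} [Semigroup Y]

theorem igOf_mul_igOf {e f : Y} (h : basicPair e f) : igOf e * igOf f = igOf (e * f) :=
  (Con.eq _).2 (ConGen.Rel.of _ _ ⟨e, f, h, rfl, rfl⟩)

theorem isIdempotentElem_igOf {e : Y} (he : e * e = e) : IsIdempotentElem (igOf e) := by
  rw [IsIdempotentElem, igOf_mul_igOf (Or.inl he), he]

@[elab_as_elim]
theorem induction_on {p : IG Y → Prop} (a : IG Y) (igOf : ∀ e, p (igOf e))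
    (mul : ∀ a b, p a → p b → p (a * b)) : p a :=
  Con.induction_on a fun w =>
    FreeSemigroup.recOnMul w igOf fun e w _ hw => by
      rw [Con.coe_mul]
      exact mul _ _ (igOf e) hw

theorem igCon_le_ker {M : Type*} [Semigroup M] (g : Y → M)
    (hg : ∀ e f, basicPair e f → g e * g f = g (e * f)) :
    igCon Y ≤ Con.ker (FreeSemigroup.lift g) :=
  Con.conGen_le.2 <| by
    rintro _ _ ⟨e, f, hef, rfl, rfl⟩
    rw [Con.ker_rel, map_mul, FreeSemigroup.lift_of, FreeSemigroup.lift_of,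
      FreeSemigroup.lift_of, hg e f hef]

def lift {M : Type*} [Semigroup M] (g : Y → M)
    (hg : ∀ e f, basicPair e f → g e * g f = g (e * f)) : IG Y →ₙ* M where
  toFun a := Con.liftOn a (FreeSemigroup.lift g) fun _ _ h => igCon_le_ker g hg h
  map_mul' a b := Con.induction_on₂ a b (map_mul (FreeSemigroup.lift g))

@[simp]
theorem lift_igOf {M : Type*} [Semigroup M] (g : Y → M)
    (hg : ∀ e f, basicPair e f → g e * g f = g (e * f)) (e : Y) : lift g hg (igOf e) = g e :=
  rfl

def ofWord (l : List Y) : WithOne (IG Y) :=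
  (l.map fun e => ((igOf e : IG Y) : WithOne (IG Y))).prod

@[simp]
theorem ofWord_nil : ofWord ([] : List Y) = 1 := rfl

@[simp]
theorem ofWord_cons (e : Y) (l : List Y) : ofWord (e :: l) = igOf e * ofWord l :=
  List.prod_cons

theorem ofWord_reduceCons (e : Y) (l : List Y) :
    ofWord (reduceCons e l) = igOf e * ofWord l := by
  induction l generalizing e with
  | nil => simp
  | cons d l ih =>
    by_cases h : Comparable e d
    · have hbasic : basicPair e d := h.imp_right Or.inl
      rw [reduceCons_cons_of_comparable h, ih, ofWord_cons, ← mul_assoc, ← WithOne.coe_mul,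
        igOf_mul_igOf hbasic]
    · rw [reduceCons_cons_of_not_comparable h, ofWord_cons]

end Semigroup

section CommSemigroup

variable {Y : Type*} [CommSemigroup Y]

def revHom : IG Y →ₙ* (IG Y)ᵐᵒᵖ :=
  lift (fun e => MulOpposite.op (igOf e)) fun e f h => by
    rw [← MulOpposite.op_mul, igOf_mul_igOf (basicPair_comm.1 h), mul_comm]

def rev (a : IG Y) : IG Y := (revHom a).unop

theorem rev_mul (a b : IG Y) : rev (a * b) = rev b * rev a := by
  simp only [rev, map_mul, MulOpposite.unop_mul]

@[simp]
theorem rev_igOf (e : Y) : rev (igOf e) = igOf e := by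
  simp [rev, revHom]

theorem rev_involutive : Function.Involutive (rev : IG Y → IG Y) := fun a =>
  induction_on a (fun e => by rw [rev_igOf, rev_igOf]) fun a b ha hb => by
    rw [rev_mul, rev_mul, ha, hb]

theorem comparable_of_basicPair {e f : Y} (h : basicPair e f) : Comparable e f := by
  rcases h with h | h | h | h
  · exact Or.inl h
  · exact Or.inr h
  · exact Or.inl (by rw [mul_comm, h])
  · exact Or.inr (by rw [mul_comm, h])

noncomputable def wordAction : WithOne (IG Y) →* Function.End {l : List Y // IsReducedWord l} :=
  WithOne.lift <| lift (fun e l => ⟨reduceCons e l, isReducedWord_reduceCons l.2 e⟩)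
    fun _ _ h => funext fun l =>
      Subtype.ext (l.2.reduceCons_reduceCons (comparable_of_basicPair h))

noncomputable def normalForm (x : WithOne (IG Y)) : List Y :=
  (wordAction x ⟨[], List.isChain_nil⟩).1

theorem isReducedWord_normalForm (x : WithOne (IG Y)) : IsReducedWord (normalForm x) :=
  (wordAction x _).2

theorem normalForm_igOf (e : Y) : normalForm (igOf e : WithOne (IG Y)) = [e] := rfl

theorem wordAction_mul_apply (x y : WithOne (IG Y)) (l : {l : List Y // IsReducedWord l}) :
    wordAction (x * y) l = wordAction x (wordAction y l) := by
  rw [map_mul]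
  rfl

theorem ofWord_wordAction (x : WithOne (IG Y)) (l : {l : List Y // IsReducedWord l}) :
    ofWord (wordAction x l).1 = x * ofWord l.1 := by
  induction x using WithOne.recOneCoe with
  | one => rw [map_one, one_mul]; rfl
  | coe a =>
    induction a using induction_on generalizing l with
    | igOf e => exact ofWord_reduceCons e l.1
    | mul a b ha hb => rw [WithOne.coe_mul, wordAction_mul_apply, ha, hb, mul_assoc]

theorem ofWord_normalForm (x : WithOne (IG Y)) : ofWord (normalForm x) = x :=
  (ofWord_wordAction x _).trans (mul_one x)

theorem wordAction_ofWord (w : List Y) (l : {l : List Y // IsReducedWord l}) :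
    (wordAction (ofWord w) l).1 = w.foldr reduceCons l.1 := by
  induction w with
  | nil => rw [ofWord_nil, map_one]; rfl
  | cons e w ih => rw [ofWord_cons, wordAction_mul_apply, List.foldr_cons, ← ih]; rfl

theorem normalForm_mul (x y : WithOne (IG Y)) :
    normalForm (x * y) = (normalForm x).foldr reduceCons (normalForm y) := by
  rw [normalForm, wordAction_mul_apply]
  conv_lhs => rw [← ofWord_normalForm x]
  exact wordAction_ofWord _ _

theorem normalForm_ofWord {t : List Y} (ht : IsReducedWord t) : normalForm (ofWord t) = t := by
  induction t with
  | nil => rfl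
  | cons e t ih =>
    rw [ofWord_cons, normalForm_mul, ih ht.tail, normalForm_igOf, List.foldr_cons, List.foldr_nil,
      ht.reduceCons_eq]

theorem rStar_igOf_of_normalForm_eq_cons {a : IG Y} {c : Y} {t : List Y} (hc : c * c = c)
    (ha : normalForm (a : WithOne (IG Y)) = c :: t) : RStar a (igOf c) := by
  set A : WithOne (IG Y) := ↑a
  set C : WithOne (IG Y) := ↑(igOf c)
  have hct : IsReducedWord (c :: t) := ha ▸ isReducedWord_normalForm A
  have hA : A = C * ofWord t := by rw [← ofWord_normalForm A, ha, ofWord_cons]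
  have hCA : C * A = A := by rw [hA, ← mul_assoc, ← WithOne.coe_mul, isIdempotentElem_igOf hc]
  have hmul : ∀ x, normalForm (x * A) = (normalForm (x * C)).foldr reduceCons t := fun x => by
    rw [hA, ← mul_assoc, normalForm_mul, normalForm_ofWord (t := t) hct.tail]
  have hend : ∀ x, EndsBelow c (normalForm (x * C)) := fun x => by
    rw [normalForm_mul, normalForm_igOf]
    exact endsBelow_foldr_reduceCons ⟨[], c, rfl, hc⟩ _
  intro x y
  change x * A = y * A ↔ x * C = y * C
  constructor
  · intro h
    rw [← ofWord_normalForm (x * C), ← ofWord_normalForm (y * C),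
      foldr_reduceCons_injective hct (isReducedWord_normalForm _) (isReducedWord_normalForm _)
        (hend x) (hend y) (by rw [← hmul, ← hmul, h])]
  · intro h
    rw [← hCA, ← mul_assoc, h, mul_assoc]

theorem exists_rStar_igOf (hidem : ∀ e : Y, e * e = e) (a : IG Y) :
    ∃ c : Y, IsIdempotentElem (igOf c) ∧ RStar a (igOf c) := by
  have hne : normalForm (a : WithOne (IG Y)) ≠ [] := fun h =>
    WithOne.coe_ne_one (by rw [← ofWord_normalForm (a : WithOne (IG Y)), h, ofWord_nil])
  obtain ⟨c, t, ha⟩ := List.exists_cons_of_ne_nil hne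
  exact ⟨c, isIdempotentElem_igOf (hidem c), rStar_igOf_of_normalForm_eq_cons (hidem c) ha⟩

end CommSemigroup

end IG

/-- For any semilattice `Y` (commutative band), `IG Y` is
abundant: every `𝓡*`-class and every `𝓛*`-class contains an idempotent. -/
theorem IG_semilattice_abundant
    {Y : Type*} [Semigroup Y] (hcomm : ∀ a b : Y, a * b = b * a)
    (hidem : ∀ a : Y, a * a = a) :
    Abundant (IG Y) := by
  let _ : CommSemigroup Y := { ‹Semigroup Y› with mul_comm := hcomm }
  intro a
  obtain ⟨c, hc, hac⟩ := IG.exists_rStar_igOf hidem a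
  obtain ⟨d, hd, had⟩ := IG.exists_rStar_igOf hidem (IG.rev a)
  refine ⟨⟨igOf c, hc, hac⟩, ⟨igOf d, hd, ?_⟩⟩
  rw [← IG.rev_igOf d] at had
  exact lStar_of_rStar_of_involutive IG.rev_involutive IG.rev_mul had
end

section
/- Let Y be a semilattice. Then every element of IG(Y) has a unique normal form: every congruence class of words in the free semigroup on {ē : e ∈ Y} contains exactly one irreducible word, and a word x̄₁⋯x̄ₙ is irreducible if and only if x_i and x_{i+1} are incomparable (x_i x_{i+1} ∉ {x_i, x_{i+1}}) for all i ∈ [1, n−1]. Consequently two words represent the same element of IG(Y) if and only if their normal forms coincide. -/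
/-! The letters of a word may be contracted pairwise, `ē f̄ ↦ (ef)‾` for comparable `e, f`;
this strictly shortens words, so every word reduces to an irreducible one. The reduction is
confluent in one step: the only critical overlap is `ē f̄ ḡ` with both pairs comparable, and
associativity forces either the two reducts to coincide or both to contract to `(efg)‾`.
Hence joinability is a congruence; it contains the defining relations and is contained in the
congruence they generate, so two words are congruent iff they have the same irreducible
descendant. In a commutative semigroup the basic pairs are exactly the comparable pairs. -/

namespace FreeSemigroup

variable {α : Type*}

def toList (w : FreeSemigroup α) : List α := w.head :: w.tail

@[simp] lemma toList_mul (v w : FreeSemigroup α) : (v * w).toList = v.toList ++ w.toList := rfl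

lemma toList_injective : Function.Injective (toList (α := α)) := by
  rintro ⟨a, l⟩ ⟨b, m⟩ h
  obtain ⟨rfl, rfl⟩ := List.cons.inj h
  rfl

lemma exists_toList_eq {l : List α} (hl : l ≠ []) : ∃ w : FreeSemigroup α, w.toList = l := by
  cases l with
  | nil => contradiction
  | cons a l => exact ⟨⟨a, l⟩, rfl⟩

end FreeSemigroup

namespace IGNormalForm

open FreeSemigroup Relation

variable {S : Type*} [Semigroup S]

def Comparable (e f : S) : Prop := e * f = e ∨ e * f = f

lemma basicPair_iff_comparable (hcomm : ∀ a b : S, a * b = b * a) (e f : S) :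
    basicPair e f ↔ Comparable e f := by
  rw [basicPair, Comparable, hcomm f e]
  tauto

lemma Comparable.overlap {e f g : S} (hef : Comparable e f) (hfg : Comparable f g) :
    (e * f = e ∧ f * g = g) ∨ (Comparable (e * f) g ∧ Comparable e (f * g)) := by
  rcases hef with hef | hef <;> rcases hfg with hfg | hfg
  · have heg : e * g = e := by
      calc e * g = e * f * g := by rw [hef]
        _ = e := by rw [mul_assoc, hfg, hef]
    exact .inr ⟨by rw [hef]; exact .inl heg, by rw [hfg]; exact .inl hef⟩
  · exact .inl ⟨hef, hfg⟩
  · exact .inr ⟨by rw [hef]; exact .inl hfg, by rw [hfg]; exact .inr hef⟩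
  · have heg : e * g = g := by
      calc e * g = e * (f * g) := by rw [hfg]
        _ = g := by rw [← mul_assoc, hef, hfg]
    exact .inr ⟨by rw [hef]; exact .inr hfg, by rw [hfg]; exact .inr heg⟩

inductive Contract : List S → List S → Prop
  | head {e f : S} (h : Comparable e f) (l : List S) : Contract (e :: f :: l) (e * f :: l)
  | cons (a : S) {l l' : List S} : Contract l l' → Contract (a :: l) (a :: l')

lemma contract_iff {l l' : List S} :
    Contract l l' ↔ ∃ (p q : List S) (e f : S), Comparable e f ∧
      l = p ++ e :: f :: q ∧ l' = p ++ e * f :: q := by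
  constructor
  · intro h
    induction h with
    | head h l => exact ⟨[], l, _, _, h, rfl, rfl⟩
    | cons a _ ih =>
      obtain ⟨p, q, e, f, hef, rfl, rfl⟩ := ih
      exact ⟨a :: p, q, e, f, hef, rfl, rfl⟩
  · rintro ⟨p, q, e, f, hef, rfl, rfl⟩
    induction p with
    | nil => exact .head hef q
    | cons a p ih => exact .cons a ih

lemma Contract.ne_nil {l l' : List S} (h : Contract l l') : l' ≠ [] := by
  cases h <;> simp

lemma forall_not_contract_iff_isChain {l : List S} :
    (∀ l', ¬ Contract l l') ↔ l.IsChain fun a b => ¬ Comparable a b := by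
  simp only [List.isChain_iff_forall_rel_of_append_cons_cons, contract_iff]
  constructor
  · intro h a b l₁ l₂ hl hab
    exact h _ ⟨l₁, l₂, a, b, hab, hl, rfl⟩
  · rintro h l' ⟨p, q, e, f, hef, hl, -⟩
    exact h hl hef

lemma reflGen_contract_cons (a : S) {l l' : List S} (h : ReflGen Contract l l') :
    ReflGen Contract (a :: l) (a :: l') := by
  rcases h with _ | h
  exacts [.refl, .single (.cons a h)]

lemma contract_cons_cons_diamond {e f : S} {l m : List S} (hef : Comparable e f)
    (h : Contract (e :: f :: l) m) :
    ∃ d, ReflGen Contract (e * f :: l) d ∧ ReflGen Contract m d := by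
  cases h with
  | head => exact ⟨_, .refl, .refl⟩
  | cons _ h =>
    cases h with
    | @head _ g hfg q =>
      rcases hef.overlap hfg with ⟨hef', hfg'⟩ | ⟨hefg, hefg'⟩
      · rw [hef', hfg']
        exact ⟨_, .refl, .refl⟩
      · refine ⟨e * f * g :: q, .single (.head hefg q), ?_⟩
        rw [mul_assoc]
        exact .single (.head hefg' q)
    | cons _ h => exact ⟨e * f :: _, .single (.cons _ h), .single (.head hef _)⟩

lemma Contract.diamond {l b c : List S} (hb : Contract l b) (hc : Contract l c) :
    ∃ d, ReflGen Contract b d ∧ ReflGen Contract c d := by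
  induction hb generalizing c with
  | head hef q => exact contract_cons_cons_diamond hef hc
  | cons a hb ih =>
    cases hc with
    | head hef q =>
      obtain ⟨d, hd₁, hd₂⟩ := contract_cons_cons_diamond hef (.cons _ hb)
      exact ⟨d, hd₂, hd₁⟩
    | cons a hc =>
      obtain ⟨d, hd₁, hd₂⟩ := ih hc
      exact ⟨a :: d, reflGen_contract_cons a hd₁, reflGen_contract_cons a hd₂⟩

lemma igCon_of_redStep {v w : FreeSemigroup S} (h : RedStep v w) : igCon S v w := by
  obtain ⟨p, q, e, f, hef, hv, hw⟩ := h
  induction p generalizing v w with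
  | nil =>
    obtain rfl : v = ⟨e, f :: q⟩ := toList_injective hv
    obtain rfl : w = ⟨e * f, q⟩ := toList_injective hw
    have hbase : igCon S (of e * of f) (of (e * f)) := ConGen.Rel.of _ _ ⟨e, f, hef, rfl, rfl⟩
    cases q with
    | nil => exact hbase
    | cons g q => exact (igCon S).mul hbase ((igCon S).refl ⟨g, q⟩)
  | cons a p ih =>
    obtain ⟨v', hv'⟩ := exists_toList_eq (l := p ++ e :: f :: q) (by simp)
    obtain ⟨w', hw'⟩ := exists_toList_eq (l := p ++ e * f :: q) (by simp)
    obtain rfl : v = of a * v' := toList_injective (by rw [toList_mul, hv']; exact hv)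
    obtain rfl : w = of a * w' := toList_injective (by rw [toList_mul, hw']; exact hw)
    exact (igCon S).mul ((igCon S).refl _) (ih hv' hw')

lemma igCon_of_reflTransGen {v w : FreeSemigroup S} (h : ReflTransGen RedStep v w) :
    igCon S v w :=
  reflTransGen_le_of_equivalence_of_le (igCon S).iseqv (fun _ _ => igCon_of_redStep) _ _ h

lemma RedStep.mul_left (u : FreeSemigroup S) {v w : FreeSemigroup S} (h : RedStep v w) :
    RedStep (u * v) (u * w) := by
  obtain ⟨p, q, e, f, hef, hv, hw⟩ := h
  refine ⟨u.toList ++ p, q, e, f, hef, ?_, ?_⟩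
  · rw [List.append_assoc, ← hv]; rfl
  · rw [List.append_assoc, ← hw]; rfl

lemma RedStep.mul_right (u : FreeSemigroup S) {v w : FreeSemigroup S} (h : RedStep v w) :
    RedStep (v * u) (w * u) := by
  obtain ⟨p, q, e, f, hef, hv, hw⟩ := h
  refine ⟨p, q ++ u.toList, e, f, hef, ?_, ?_⟩
  · change v.toList ++ u.toList = _
    rw [show v.toList = _ from hv]
    simp
  · change w.toList ++ u.toList = _
    rw [show w.toList = _ from hw]
    simp

lemma reflTransGen_redStep_mul {v v' w w' : FreeSemigroup S}
    (hv : ReflTransGen RedStep v v') (hw : ReflTransGen RedStep w w') :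
    ReflTransGen RedStep (v * w) (v' * w') :=
  (ReflTransGen.lift (· * w) (fun _ _ => RedStep.mul_right w) _ _ hv).trans
    (ReflTransGen.lift (v' * ·) (fun _ _ => RedStep.mul_left v') _ _ hw)

lemma RedStep.length_lt {v w : FreeSemigroup S} (h : RedStep v w) : w.length < v.length := by
  obtain ⟨p, q, e, f, -, hv, hw⟩ := h
  have hv' := congrArg List.length hv
  have hw' := congrArg List.length hw
  simp only [List.length_cons, List.length_append] at hv' hw'
  simp only [FreeSemigroup.length]
  omega

lemma exists_isNF_reflTransGen (w : FreeSemigroup S) :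
    ∃ u, IsNF u ∧ ReflTransGen RedStep w u := by
  by_cases hw : IsNF w
  · exact ⟨w, hw, .refl⟩
  · obtain ⟨w', hww'⟩ := not_forall_not.mp hw
    have := RedStep.length_lt hww'
    obtain ⟨u, hu, hw'u⟩ := exists_isNF_reflTransGen w'
    exact ⟨u, hu, .head hww' hw'u⟩
termination_by w.length

section Words

variable (hcomm : ∀ a b : S, a * b = b * a)
include hcomm

lemma redStep_iff_contract {v w : FreeSemigroup S} :
    RedStep v w ↔ Contract v.toList w.toList := by
  simp only [RedStep, contract_iff, basicPair_iff_comparable hcomm]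
  rfl

lemma isNF_iff_isChain (w : FreeSemigroup S) :
    IsNF w ↔ w.toList.IsChain fun a b => ¬ Comparable a b := by
  rw [← forall_not_contract_iff_isChain]
  refine ⟨fun hw l hl => ?_, fun hw w' h => hw _ ((redStep_iff_contract hcomm).mp h)⟩
  obtain ⟨w', rfl⟩ := exists_toList_eq hl.ne_nil
  exact hw w' ((redStep_iff_contract hcomm).mpr hl)

lemma reflGen_redStep_of_contract {v w : FreeSemigroup S}
    (h : ReflGen Contract v.toList w.toList) : ReflGen RedStep v w := by
  generalize hw : w.toList = l at h
  cases h with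
  | refl => rw [toList_injective hw]
  | single h => exact .single ((redStep_iff_contract hcomm).mpr (hw ▸ h))

lemma RedStep.diamond {w b c : FreeSemigroup S} (hb : RedStep w b) (hc : RedStep w c) :
    ∃ d, ReflGen RedStep b d ∧ ReflGen RedStep c d := by
  rw [redStep_iff_contract hcomm] at hb hc
  obtain ⟨l, hbl, hcl⟩ := hb.diamond hc
  obtain ⟨d, rfl⟩ : ∃ d : FreeSemigroup S, d.toList = l := by
    cases hbl with
    | refl => exact ⟨b, rfl⟩
    | single h => exact exists_toList_eq h.ne_nil
  exact ⟨d, reflGen_redStep_of_contract hcomm hbl, reflGen_redStep_of_contract hcomm hcl⟩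

def joinCon : Con (FreeSemigroup S) where
  r := Join (ReflTransGen RedStep)
  iseqv := equivalence_join_reflTransGen fun _ _ _ hb hc =>
    (RedStep.diamond hcomm hb hc).imp fun _ hd => ⟨hd.1, hd.2.to_reflTransGen⟩
  mul' := by
    rintro _ _ _ _ ⟨d₁, hv₁, hw₁⟩ ⟨d₂, hv₂, hw₂⟩
    exact ⟨d₁ * d₂, reflTransGen_redStep_mul hv₁ hv₂, reflTransGen_redStep_mul hw₁ hw₂⟩

lemma igCon_iff_join {v w : FreeSemigroup S} :
    igCon S v w ↔ Join (ReflTransGen RedStep) v w := by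
  refine ⟨fun h => ?_, fun ⟨d, hv, hw⟩ =>
    (igCon S).trans (igCon_of_reflTransGen hv) ((igCon S).symm (igCon_of_reflTransGen hw))⟩
  have hle : igCon S ≤ joinCon hcomm := Con.conGen_le.mpr <| by
    rintro _ _ ⟨e, f, hef, rfl, rfl⟩
    exact ⟨_, .single ⟨[], [], e, f, hef, rfl, rfl⟩, .refl⟩
  exact hle h

lemma eq_of_isNF_of_igCon {u v : FreeSemigroup S} (hu : IsNF u) (hv : IsNF v)
    (h : igCon S u v) : u = v := by
  obtain ⟨d, hud, hvd⟩ := (igCon_iff_join hcomm).mp h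
  exact ((reflTransGen_iff_eq hu).mp hud).symm.trans ((reflTransGen_iff_eq hv).mp hvd)

end Words

end IGNormalForm

open IGNormalForm

theorem IG_semilattice_unique_normal_forms_general
    {Y : Type*} [Semigroup Y] (hcomm : ∀ a b : Y, a * b = b * a) :
    (∀ w : FreeSemigroup Y, IsNF w ↔
      List.Chain' (fun a b : Y => ¬ (a * b = a ∨ a * b = b)) (w.head :: w.tail)) ∧
    (∀ w : FreeSemigroup Y, ∃! u : FreeSemigroup Y, igCon Y w u ∧ IsNF u) ∧
    (∀ v w : FreeSemigroup Y, igCon Y v w ↔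
      ∃ u : FreeSemigroup Y, IsNF u ∧ Relation.ReflTransGen RedStep v u ∧
        Relation.ReflTransGen RedStep w u) := by
  refine ⟨isNF_iff_isChain hcomm, fun w => ?_, fun v w => ?_⟩
  · obtain ⟨u, hu, hwu⟩ := exists_isNF_reflTransGen w
    refine ⟨u, ⟨igCon_of_reflTransGen hwu, hu⟩, fun u' ⟨hwu', hu'⟩ => ?_⟩
    exact eq_of_isNF_of_igCon hcomm hu' hu
      ((igCon Y).trans ((igCon Y).symm hwu') (igCon_of_reflTransGen hwu))
  · rw [igCon_iff_join hcomm]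
    constructor
    · rintro ⟨d, hvd, hwd⟩
      obtain ⟨u, hu, hdu⟩ := exists_isNF_reflTransGen d
      exact ⟨u, hu, hvd.trans hdu, hwd.trans hdu⟩
    · rintro ⟨u, -, hvu, hwu⟩
      exact ⟨u, hvu, hwu⟩

/-- Over a semilattice `Y`, a word is irreducible iff adjacent
letters are incomparable; every congruence class of `igCon Y` contains exactly
one irreducible word; and two words represent the same element of `IG Y` iff
they reduce to the same normal form. -/
theorem IG_semilattice_unique_normal_forms
    {Y : Type*} [Semigroup Y] (hcomm : ∀ a b : Y, a * b = b * a)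
    (hidem : ∀ a : Y, a * a = a) :
    (∀ w : FreeSemigroup Y, IsNF w ↔
      List.Chain' (fun a b : Y => ¬ (a * b = a ∨ a * b = b)) (w.head :: w.tail)) ∧
    (∀ w : FreeSemigroup Y, ∃! u : FreeSemigroup Y, igCon Y w u ∧ IsNF u) ∧
    (∀ v w : FreeSemigroup Y, igCon Y v w ↔
      ∃ u : FreeSemigroup Y, IsNF u ∧ Relation.ReflTransGen RedStep v u ∧
        Relation.ReflTransGen RedStep w u) :=
  IG_semilattice_unique_normal_forms_general hcomm
end

section
/- Let Y = {e, f, g} be the three-element semilattice in which e and f are incomparable and ef = fe = eg = ge = fg = gf = g. Then the element ē·f̄ of IG(Y) is not a regular element (there is no w ∈ IG(Y) with ēf̄ · w · ēf̄ = ēf̄); in particular IG(Y) is not a regular semigroup. -/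
/-! Map `IG Y` to the semigroup of alternating words in two idempotent letters `E`, `F`, with a
zero adjoined, by `ē ↦ E`, `f̄ ↦ F`, `ḡ ↦ 0`. This respects every defining relation, because the
only pairs of `Y` that are not basic are `(e, f)` and `(f, e)`. The number of letter changes is
superadditive, so `u x u` has at least twice as many as `u`; hence the image `EF` of `ē f̄`, which
has one letter change, is not regular, and neither is `ē f̄`. -/

/-- Regularity in the sense of semigroup theory; Mathlib's `IsRegular` means cancellable. -/
def IsRegularElem {S : Type*} [Mul S] (a : S) : Prop :=
  ∃ x : S, a * x * a = a

theorem IsRegularElem.map {S T : Type*} [Mul S] [Mul T] {a : S} (h : IsRegularElem a)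
    (φ : S →ₙ* T) : IsRegularElem (φ a) := by
  obtain ⟨x, hx⟩ := h
  exact ⟨φ x, by rw [← map_mul, ← map_mul, hx]⟩

theorem IsRegularElem.of_coe {S : Type*} [Mul S] {a : S}
    (h : IsRegularElem (a : WithZero S)) : IsRegularElem a := by
  obtain ⟨x, hx⟩ := h
  induction x with
  | zero => simp at hx
  | coe y => exact ⟨y, WithZero.coe_injective hx⟩

/-- The nonempty alternating word in two letters with first letter `first`, last letter `last`
and `switches` changes of letter. -/
@[ext]
structure AltWord where
  first : Bool
  switches : ℕ
  last : Bool

namespace AltWord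

instance : Mul AltWord where
  mul u v := ⟨u.first, u.switches + v.switches + if u.last = v.first then 0 else 1, v.last⟩

@[simp]
theorem first_mul (u v : AltWord) : (u * v).first = u.first :=
  rfl

@[simp]
theorem last_mul (u v : AltWord) : (u * v).last = v.last :=
  rfl

@[simp]
theorem switches_mul (u v : AltWord) :
    (u * v).switches = u.switches + v.switches + if u.last = v.first then 0 else 1 :=
  rfl

instance : Semigroup AltWord where
  mul_assoc u v w := by
    ext
    · rfl
    · simp only [switches_mul, first_mul, last_mul]
      split_ifs <;> omega
    · rfl

def of (b : Bool) : AltWord :=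
  ⟨b, 0, b⟩

theorem isIdempotentElem_of (b : Bool) : IsIdempotentElem (of b) := by
  ext <;> simp [of]

theorem not_isRegularElem_of_switches_pos {u : AltWord} (hu : 0 < u.switches) :
    ¬ IsRegularElem u := by
  rintro ⟨x, hx⟩
  have := congrArg switches hx
  simp only [switches_mul] at this
  omega

end AltWord

def igLift {B S : Type*} [Semigroup B] [Semigroup S] (φ : B → S)
    (h : ∀ a b : B, basicPair a b → φ a * φ b = φ (a * b)) : IG B →ₙ* S where
  toFun x := Con.liftOn x (FreeSemigroup.lift φ) fun _ _ huv => by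
    have hle : igCon B ≤ Con.ker (FreeSemigroup.lift φ) := by
      refine Con.conGen_le.mpr ?_
      rintro _ _ ⟨a, b, hab, rfl, rfl⟩
      simpa using h a b hab
    exact hle huv
  map_mul' x y := Con.induction_on₂ x y fun u v => map_mul (FreeSemigroup.lift φ) u v

@[simp]
theorem igLift_igOf {B S : Type*} [Semigroup B] [Semigroup S] (φ : B → S)
    (h : ∀ a b : B, basicPair a b → φ a * φ b = φ (a * b)) (a : B) :
    igLift φ h (igOf a) = φ a :=
  rfl

section ThreeElementSemilattice

variable {Y : Type*} [Semigroup Y] {e f g : Y}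

theorem eq_or_eq_or_eq_of_basicPair (hcomm : ∀ a b : Y, a * b = b * a)
    (hall : ∀ z : Y, z = e ∨ z = f ∨ z = g) (heg : e ≠ g) (hfg : f ≠ g) (hmul_ef : e * f = g)
    {a b : Y} (hab : basicPair a b) : a = b ∨ a = g ∨ b = g := by
  have hfe : f * e = g := hcomm f e ▸ hmul_ef
  rcases hall a with rfl | rfl | rfl <;> rcases hall b with rfl | rfl | rfl <;>
    simp_all [basicPair, heg.symm, hfg.symm]

theorem mul_g_eq_g (hidem : ∀ a : Y, a * a = a) (hall : ∀ z : Y, z = e ∨ z = f ∨ z = g)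
    (hmul_eg : e * g = g) (hmul_fg : f * g = g) (z : Y) : z * g = g := by
  rcases hall z with rfl | rfl | rfl <;> simp only [hmul_eg, hmul_fg, hidem]

theorem exists_mulHom_igOf_eq_altWord_of (hcomm : ∀ a b : Y, a * b = b * a)
    (hidem : ∀ a : Y, a * a = a) (hall : ∀ z : Y, z = e ∨ z = f ∨ z = g)
    (hef : e ≠ f) (heg : e ≠ g) (hfg : f ≠ g)
    (hmul_ef : e * f = g) (hmul_eg : e * g = g) (hmul_fg : f * g = g) :
    ∃ φ : IG Y →ₙ* WithZero AltWord,
      φ (igOf e) = AltWord.of true ∧ φ (igOf f) = AltWord.of false := by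
  classical
  let ψ : Y → WithZero AltWord := fun z =>
    if z = e then AltWord.of true else if z = f then AltWord.of false else 0
  have hψg : ψ g = 0 := by simp [ψ, heg.symm, hfg.symm]
  have hψ_idem (a : Y) : ψ a * ψ a = ψ a := by
    simp only [ψ]
    split_ifs <;> simp [← WithZero.coe_mul, (AltWord.isIdempotentElem_of _).eq]
  have hmul_g := mul_g_eq_g hidem hall hmul_eg hmul_fg
  refine ⟨igLift ψ fun a b hab => ?_, by simp [ψ], by simp [ψ, hef.symm]⟩
  rcases eq_or_eq_or_eq_of_basicPair hcomm hall heg hfg hmul_ef hab with rfl | rfl | rfl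
  · rw [hidem, hψ_idem]
  · rw [hcomm, hmul_g, hψg, zero_mul]
  · rw [hmul_g, hψg, mul_zero]

end ThreeElementSemilattice

/-- For the three element semilattice `Y = {e, f, g}` with
`e, f` incomparable and all other products equal to `g`, the element `ē f̄` of
`IG Y` is not regular; in particular `IG Y` is not a regular semigroup. -/
theorem IG_three_element_semilattice_not_regular
    {Y : Type*} [Semigroup Y] (hcomm : ∀ a b : Y, a * b = b * a)
    (hidem : ∀ a : Y, a * a = a)
    (e f g : Y) (hall : ∀ z : Y, z = e ∨ z = f ∨ z = g)
    (hef : e ≠ f) (heg : e ≠ g) (hfg : f ≠ g)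
    (hmul_ef : e * f = g) (hmul_eg : e * g = g) (hmul_fg : f * g = g) :
    (¬ ∃ w : IG Y, (igOf e * igOf f) * w * (igOf e * igOf f) = igOf e * igOf f) ∧
      ¬ (∀ a : IG Y, ∃ w : IG Y, a * w * a = a) := by
  obtain ⟨φ, hφe, hφf⟩ :=
    exists_mulHom_igOf_eq_altWord_of hcomm hidem hall hef heg hfg hmul_ef hmul_eg hmul_fg
  have hnot : ¬ IsRegularElem (igOf e * igOf f) := by
    intro h
    have himage := h.map φ
    rw [map_mul, hφe, hφf, ← WithZero.coe_mul] at himage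
    exact AltWord.not_isRegularElem_of_switches_pos (by simp [AltWord.of]) himage.of_coe
  exact ⟨hnot, fun h => hnot (h _)⟩
end

section
/- Let B be a rectangular band and u₁, …, uₙ ∈ B. Then in IG(B) the element ū₁⋯ūₙ is Green's 𝓡-related to ū₁ and Green's 𝓛-related to ūₙ. Consequently IG(B) is a regular semigroup. -/
section Aux
variable {B : Type*} [Semigroup B]

theorem igOf_mul_of_basic {e f : B} (h : basicPair e f) :
    igOf e * igOf f = igOf (e * f) := by
  show ((FreeSemigroup.of e * FreeSemigroup.of f : FreeSemigroup B) : IG B) = _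
  rw [igOf, Con.eq]
  exact ConGen.Rel.of _ _ ⟨e, f, h, rfl, rfl⟩

variable (hidem : ∀ x : B, x * x = x) (hrect : ∀ x y : B, x * y * x = x)
include hidem hrect

/-- ē f̄ (fe)‾ = ē -/
theorem keyA (e f : B) : igOf e * igOf f * igOf (f * e) = igOf e := by
  have h1 : igOf f * igOf (f * e) = igOf (f * e) := by
    have := igOf_mul_of_basic (e := f) (f := f * e)
      (Or.inr (Or.inl (by rw [← mul_assoc, hidem])))
    rwa [← mul_assoc, hidem] at this
  have h2 : igOf e * igOf (f * e) = igOf e := by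
    have := igOf_mul_of_basic (e := e) (f := f * e)
      (Or.inl (by rw [← mul_assoc]; exact hrect e f))
    rwa [← mul_assoc, hrect] at this
  rw [mul_assoc, h1, h2]

/-- (fe)‾ ē f̄ = f̄ -/
theorem keyA' (e f : B) : igOf (f * e) * igOf e * igOf f = igOf f := by
  have h1 : igOf (f * e) * igOf e = igOf (f * e) := by
    have := igOf_mul_of_basic (e := f * e) (f := e)
      (Or.inl (by rw [mul_assoc, hidem]))
    rwa [mul_assoc, hidem] at this
  have h2 : igOf (f * e) * igOf f = igOf f := by
    have := igOf_mul_of_basic (e := f * e) (f := f)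
      (Or.inr (Or.inl (hrect f e)))
    rwa [hrect] at this
  rw [h1, h2]

end Aux

section Seq
variable {M : Type*} [Semigroup M]

theorem prodSeq_succ (x : ℕ → M) {a b : ℕ} (h : a ≤ b) :
    prodSeq x a (b + 1) = prodSeq x a b * x (b + 1) := by
  unfold prodSeq
  rw [Nat.succ_sub h, List.range_succ, List.foldl_append]
  simp [Nat.add_sub_cancel' h]

theorem prodSeq_shift (x : ℕ → M) (a b : ℕ) :
    prodSeq x (a + 1) (b + 1) = prodSeq (fun i => x (i + 1)) a b := by
  unfold prodSeq
  rw [Nat.succ_sub_succ]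
  congr 1
  funext acc i
  have : a + 1 + i + 1 = a + i + 1 + 1 := by omega
  rw [this]

theorem prodSeq_cons_aux (x : ℕ → M) (m a : ℕ) :
    prodSeq x a (a + m + 1) = x a * prodSeq x (a + 1) (a + m + 1) := by
  induction m with
  | zero =>
    show prodSeq x a (a + 1) = x a * prodSeq x (a + 1) (a + 1)
    unfold prodSeq
    simp [List.range_succ]
  | succ m ih =>
    have h1 : a ≤ a + m + 1 := by omega
    have h2 : a + 1 ≤ a + m + 1 := by omega
    have e1 : a + (m + 1) + 1 = (a + m + 1) + 1 := by omega
    rw [e1, prodSeq_succ x h1, ih, mul_assoc, ← prodSeq_succ x h2]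

theorem prodSeq_cons (x : ℕ → M) {a b : ℕ} (h : a < b) :
    prodSeq x a b = x a * prodSeq x (a + 1) b := by
  have hb : b = a + (b - a - 1) + 1 := by omega
  rw [hb]; exact prodSeq_cons_aux x _ a

theorem prodSeq_congr {x y : ℕ → M} {a b : ℕ} (hab : a ≤ b)
    (h : ∀ i, a ≤ i → i ≤ b → x i = y i) :
    prodSeq x a b = prodSeq y a b := by
  unfold prodSeq
  rw [h a le_rfl hab]
  exact List.foldl_ext _ _ _ (fun acc i hi => by
    rw [h (a + i + 1) (by omega) (by
      have := List.mem_range.mp hi; omega)])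

end Seq

section IGW
variable {B : Type*} [Semigroup B]

theorem igWord_succ (u : ℕ → B) {a b : ℕ} (h : a ≤ b) :
    igWord u a (b + 1) = igWord u a b * igOf (u (b + 1)) := by
  unfold igWord freeWord igOf
  rw [prodSeq_succ _ h, Con.coe_mul]

theorem igWord_cons (u : ℕ → B) {a b : ℕ} (h : a < b) :
    igWord u a b = igOf (u a) * igWord u (a + 1) b := by
  unfold igWord freeWord igOf
  rw [prodSeq_cons _ h, Con.coe_mul]

theorem igWord_single (u : ℕ → B) (a : ℕ) : igWord u a a = igOf (u a) := by
  unfold igWord freeWord prodSeq igOf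
  simp

theorem freeWord_single {C : Type*} (u : ℕ → C) (a : ℕ) :
    freeWord u a a = FreeSemigroup.of (u a) := by
  unfold freeWord prodSeq
  simp

variable (hidem : ∀ x : B, x * x = x) (hrect : ∀ x y : B, x * y * x = x)
include hidem hrect

/-- ē (x e)‾ = ē -/
theorem absorbR1 (e x : B) : igOf e * igOf (x * e) = igOf e := by
  have := igOf_mul_of_basic (e := e) (f := x * e)
    (Or.inr (Or.inr (Or.inr (by rw [mul_assoc, hidem]))))
  rwa [← mul_assoc, hrect] at this

/-- f̄ (f e)‾ = (f e)‾ -/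
theorem absorbR2 (f e : B) : igOf f * igOf (f * e) = igOf (f * e) := by
  have := igOf_mul_of_basic (e := f) (f := f * e)
    (Or.inr (Or.inl (by rw [← mul_assoc, hidem])))
  rwa [← mul_assoc, hidem] at this

/-- (f e)‾ ē = (f e)‾ -/
theorem absorbL1 (f e : B) : igOf (f * e) * igOf e = igOf (f * e) := by
  have := igOf_mul_of_basic (e := f * e) (f := e)
    (Or.inl (by rw [mul_assoc, hidem]))
  rwa [mul_assoc, hidem] at this

/-- (f e)‾ f̄ = f̄ -/
theorem absorbL2 (f e : B) : igOf (f * e) * igOf f = igOf f := by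
  have := igOf_mul_of_basic (e := f * e) (f := f)
    (Or.inr (Or.inl (hrect f e)))
  rwa [hrect] at this

theorem igOf_idem (e : B) : igOf e * igOf e = igOf e := by
  have := igOf_mul_of_basic (e := e) (f := e) (Or.inl (hidem e))
  rwa [hidem] at this

theorem wordAbsorbR (u : ℕ → B) (x : B) {a b : ℕ} (h : a ≤ b) :
    igWord u a b * igOf (x * u b) = igWord u a b := by
  rcases eq_or_lt_of_le h with rfl | hlt
  · rw [igWord_single, absorbR1 hidem hrect]
  · obtain ⟨c, rfl⟩ : ∃ c, b = c + 1 := ⟨b - 1, by omega⟩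
    rw [igWord_succ u (by omega : a ≤ c), mul_assoc, absorbR1 hidem hrect]

theorem wordAbsorbL (u : ℕ → B) (x : B) {a b : ℕ} (h : a ≤ b) :
    igOf (u a * x) * igWord u a b = igWord u a b := by
  rcases eq_or_lt_of_le h with rfl | hlt
  · rw [igWord_single, absorbL2 hidem hrect]
  · rw [igWord_cons u hlt, ← mul_assoc, absorbL2 hidem hrect]

theorem peelR (u : ℕ → B) {b : ℕ} (h : 1 ≤ b) :
    igWord u 1 (b + 1) * igOf (u (b + 1) * u b) = igWord u 1 b := by
  rw [igWord_succ u h, mul_assoc, absorbR2 hidem hrect,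
    wordAbsorbR hidem hrect u (u (b + 1)) h]

theorem peelL (u : ℕ → B) {a b : ℕ} (h : a < b) :
    igOf (u (a + 1) * u a) * igWord u a b = igWord u (a + 1) b := by
  rw [igWord_cons u h, ← mul_assoc, absorbL1 hidem hrect,
    wordAbsorbL hidem hrect u (u a) (by omega : a + 1 ≤ b)]

theorem existsR (u : ℕ → B) : ∀ n : ℕ, 1 ≤ n →
    ∃ s : IG B, igWord u 1 n * s = igOf (u 1) := by
  intro n hn
  induction n, hn using Nat.le_induction with
  | base => exact ⟨igOf (u 1), by rw [igWord_single, igOf_idem hidem hrect]⟩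
  | succ n hn ih =>
    obtain ⟨s, hs⟩ := ih
    exact ⟨igOf (u (n + 1) * u n) * s, by
      rw [← mul_assoc, peelR hidem hrect u hn, hs]⟩

theorem existsT (u : ℕ → B) : ∀ n : ℕ, 1 ≤ n →
    ∃ t : IG B, igOf (u 1) * t = igWord u 1 n := by
  intro n hn
  induction n, hn using Nat.le_induction with
  | base => exact ⟨igOf (u 1), by rw [igOf_idem hidem hrect, igWord_single]⟩
  | succ n hn ih =>
    obtain ⟨t, ht⟩ := ih
    exact ⟨t * igOf (u (n + 1)), by
      rw [← mul_assoc, ht, ← igWord_succ u hn]⟩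

theorem existsL_aux (u : ℕ → B) : ∀ (m a : ℕ),
    ∃ s : IG B, s * igWord u a (a + m) = igOf (u (a + m)) := by
  intro m
  induction m with
  | zero =>
    intro a
    exact ⟨igOf (u a), by
      simpa [igWord_single] using igOf_idem hidem hrect (u a)⟩
  | succ m ih =>
    intro a
    obtain ⟨s, hs⟩ := ih (a + 1)
    refine ⟨s * igOf (u (a + 1) * u a), ?_⟩
    have h1 : a < a + (m + 1) := by omega
    have e1 : a + 1 + m = a + (m + 1) := by omega
    rw [mul_assoc, peelL hidem hrect u h1, ← e1, hs, e1]

theorem existsL (u : ℕ → B) (n : ℕ) (hn : 1 ≤ n) :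
    ∃ s : IG B, s * igWord u 1 n = igOf (u n) := by
  obtain ⟨s, hs⟩ := existsL_aux hidem hrect u (n - 1) 1
  exact ⟨s, by rwa [show 1 + (n - 1) = n by omega] at hs⟩

theorem existsTL (u : ℕ → B) (n : ℕ) (hn : 1 ≤ n) :
    ∃ t : IG B, t * igOf (u n) = igWord u 1 n := by
  rcases eq_or_lt_of_le hn with rfl | h1
  · exact ⟨igOf (u 1), by rw [igOf_idem hidem hrect, igWord_single]⟩
  · obtain ⟨m, rfl⟩ : ∃ m, n = m + 1 := ⟨n - 1, by omega⟩
    exact ⟨igWord u 1 m, (igWord_succ u (by omega : 1 ≤ m)).symm⟩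

end IGW

theorem freeSemigroup_rep {B : Type*} (w : FreeSemigroup B) :
    ∃ n : ℕ, 1 ≤ n ∧ ∃ u : ℕ → B, w = freeWord u 1 n := by
  induction w using FreeSemigroup.recOnMul with
  | ih1 x => exact ⟨1, le_rfl, fun _ => x, (freeWord_single (fun _ => x) 1).symm⟩
  | ih2 x y _ ihy =>
    obtain ⟨n, hn, u, rfl⟩ := ihy
    refine ⟨n + 1, by omega, fun i => if i ≤ 1 then x else u (i - 1), ?_⟩
    have key : prodSeq (fun i => FreeSemigroup.of
          (if i ≤ 1 then x else u (i - 1))) 1 (n + 1)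
        = FreeSemigroup.of x * prodSeq (fun i => FreeSemigroup.of (u i)) 1 n := by
      rw [prodSeq_cons _ (show (1 : ℕ) < n + 1 by omega), prodSeq_shift]
      have h2 : prodSeq (fun i => FreeSemigroup.of
            (if i + 1 ≤ 1 then x else u (i + 1 - 1))) 1 n
          = prodSeq (fun i => FreeSemigroup.of (u i)) 1 n :=
        prodSeq_congr hn (fun i hi1 hi2 => by
          rw [if_neg (by omega), show i + 1 - 1 = i from by omega])
      rw [h2, if_pos le_rfl]
    exact key.symm

/-- For a rectangular band `B` and `u₁, …, uₙ ∈ B` (`n ≥ 1`),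
the element `ū₁ ⋯ ūₙ` of `IG B` is `𝓡`-related to `ū₁` and `𝓛`-related to
`ūₙ`; consequently `IG B` is a regular semigroup. -/
theorem IG_rectangular_band_regular
    {B : Type*} [Semigroup B] (hidem : ∀ x : B, x * x = x)
    (hrect : ∀ x y : B, x * y * x = x) :
    (∀ (n : ℕ), 1 ≤ n → ∀ u : ℕ → B,
      GreenR (igWord u 1 n) (igOf (u 1)) ∧ GreenL (igWord u 1 n) (igOf (u n))) ∧
    (∀ a : IG B, ∃ w : IG B, a * w * a = a) := by
  refine ⟨fun n hn u => ⟨?_, ?_⟩, fun a => ?_⟩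
  · obtain ⟨s, hs⟩ := existsR hidem hrect u n hn
    obtain ⟨t, ht⟩ := existsT hidem hrect u n hn
    exact Or.inr ⟨s, t, hs, ht⟩
  · obtain ⟨s, hs⟩ := existsL hidem hrect u n hn
    obtain ⟨t, ht⟩ := existsTL hidem hrect u n hn
    exact Or.inr ⟨s, t, hs, ht⟩
  · induction a using Con.induction_on with
    | _ w =>
      obtain ⟨n, hn, u, rfl⟩ := freeSemigroup_rep w
      obtain ⟨s, hs⟩ := existsR hidem hrect u n hn
      obtain ⟨t, ht⟩ := existsT hidem hrect u n hn
      refine ⟨s, ?_⟩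
      show igWord u 1 n * s * igWord u 1 n = igWord u 1 n
      rw [hs, ← ht, ← mul_assoc, igOf_idem hidem hrect]
end

section
/- Let B be a band. Then every 𝒟-class of B is either a left zero semigroup or a right zero semigroup (i.e. B is Y-basic) if and only if for all e,f ∈ B: the pair (e,f) is a basic pair exactly when e and f are 𝒥-comparable (efe = e or fef = f). -/
section Aux
variable {B : Type*} [Semigroup B]

/-- Key universal band identity: `(sct)·c·(sct) = sct`. -/
lemma bandL0 (hband : ∀ x : B, x * x = x) (s c t : B) : (s*(c*t)) * (c*(s*(c*t))) = s*(c*t) := by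
  calc (s*(c*t)) * (c*(s*(c*t)))
      = ((s*c)*(s*c)) * (t*(c*(s*(c*t)))) := by rw [hband]; simp only [mul_assoc]
    _ = s*((c*(s*(c*t)))*(c*(s*(c*t)))) := by simp only [mul_assoc]
    _ = s*(c*(s*(c*t))) := by rw [hband]
    _ = ((s*c)*(s*c))*t := by simp only [mul_assoc]
    _ = (s*c)*t := by rw [hband]
    _ = s*(c*t) := mul_assoc s c t

/-- Transitivity of the 𝒥-preorder on a band. -/
lemma bandPre (hband : ∀ x : B, x * x = x) {a b c : B} (hab : a*b*a = a) (hbc : b*c*b = b) : a*c*a = a := by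
  have ha : a = (a*b)*(c*(b*a)) := by
    have h : a*(b*c*b)*a = (a*b)*(c*(b*a)) := by simp only [mul_assoc]
    rw [hbc, hab] at h
    exact h
  calc a*c*a = ((a*b)*(c*(b*a))) * (c*((a*b)*(c*(b*a)))) := by
        rw [← ha]; exact mul_assoc a c a
    _ = (a*b)*(c*(b*a)) := bandL0 hband (a*b) c (b*a)
    _ = a := ha.symm

/-- D-classes are rectangular. -/
lemma bandRect (hband : ∀ x : B, x * x = x) {e x y : B} (hx : dEquiv x e) (hy : dEquiv y e) : x*y*x = x :=
  bandPre hband hx.1 hy.2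

/-- D-classes are closed under multiplication. -/
lemma bandClos (hband : ∀ x : B, x * x = x) {e x y : B} (hx : dEquiv x e) (hy : dEquiv y e) : dEquiv (x*y) e := by
  have A : x*y*x = x := bandRect hband hx hy
  constructor
  · have hab : (x*y)*x*(x*y) = x*y := by
      calc (x*y)*x*(x*y) = x*(x*y) := by rw [A]
        _ = x*y := by rw [← mul_assoc, hband]
    exact bandPre hband hab hx.1
  · have hbc : x*(x*y)*x = x := by
      calc x*(x*y)*x = ((x*x)*y)*x := by simp only [mul_assoc]
        _ = x*y*x := by rw [hband]
        _ = x := A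
    exact bandPre hband hx.2 hbc

end Aux


/-- A band `B` is `Y`-basic (every `𝒟`-class is left zero or
right zero) iff for all `e, f ∈ B`, `(e,f)` is a basic pair exactly when `e`
and `f` are `𝒥`-comparable. -/
theorem band_Ybasic_iff_basicPair_eq_comparable
    {B : Type*} [Semigroup B] (hband : ∀ x : B, x * x = x) :
    (∀ e : B, (∀ p q : B, dEquiv p e → dEquiv q e → p * q = p) ∨
      (∀ p q : B, dEquiv p e → dEquiv q e → p * q = q)) ↔
    (∀ e f : B, basicPair e f ↔ (e * f * e = e ∨ f * e * f = f)) := by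
  have hdd : ∀ e : B, dEquiv e e := by
    intro e
    constructor <;> rw [hband, hband]
  constructor
  · intro hY e f
    constructor
    · rintro (h|h|h|h)
      · left; rw [h, hband]
      · right; rw [mul_assoc, h, hband]
      · left; rw [mul_assoc, h, hband]
      · right; rw [h, hband]
    · rintro (h|h)
      · -- h : e*f*e = e
        rcases hY e with hL|hR
        · have hef : dEquiv (e*f) e := by
            constructor
            · rw [h, ← mul_assoc, hband]
            · rw [← mul_assoc, hband, h]
          left
          calc e*f = (e*e)*f := by rw [hband]
            _ = e*(e*f) := mul_assoc e e f
            _ = e := hL e (e*f) (hdd e) hef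
        · have hfe : dEquiv (f*e) e := by
            constructor
            · rw [mul_assoc f e e, hband, hband]
            · rw [← mul_assoc, h, hband]
          right; right; left
          calc f*e = f*(e*e) := by rw [hband]
            _ = (f*e)*e := (mul_assoc f e e).symm
            _ = e := hR (f*e) e hfe (hdd e)
      · -- h : f*e*f = f
        rcases hY f with hL|hR
        · have hfe : dEquiv (f*e) f := by
            constructor
            · rw [h, ← mul_assoc, hband]
            · rw [← mul_assoc, hband, h]
          right; right; right
          calc f*e = (f*f)*e := by rw [hband]
            _ = f*(f*e) := mul_assoc f f e
            _ = f := hL f (f*e) (hdd f) hfe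
        · have hef : dEquiv (e*f) f := by
            constructor
            · rw [mul_assoc e f f, hband, hband]
            · rw [← mul_assoc, h, hband]
          right; left
          calc e*f = e*(f*f) := by rw [hband]
            _ = (e*f)*f := (mul_assoc e f f).symm
            _ = f := hR (e*f) f hef (hdd f)
  · intro H e
    by_contra hcon
    push_neg at hcon
    obtain ⟨h1, h2⟩ := hcon
    obtain ⟨p, q, hp, hq, hpq⟩ := h1
    obtain ⟨a, b, ha, hb, hab⟩ := h2
    have hu : dEquiv (a*p) e := bandClos hband ha hp
    have hv : dEquiv (b*q) e := bandClos hband hb hq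
    have hcomp : (a*p)*(b*q)*(a*p) = a*p := bandRect hband hu hv
    have hbasic : basicPair (a*p) (b*q) := (H (a*p) (b*q)).mpr (Or.inl hcomp)
    rcases hbasic with h|h|h|h
    · -- (a*p)*(b*q) = a*p  ⇒ p*q = p
      have pap : p*a*p = p := bandRect hband hp ha
      have e1 : p*(b*q) = p := by
        calc p*(b*q) = (p*a*p)*(b*q) := by rw [pap]
          _ = p*((a*p)*(b*q)) := by simp only [mul_assoc]
          _ = p*(a*p) := by rw [h]
          _ = p*a*p := (mul_assoc p a p).symm
          _ = p := pap
      exact hpq (by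
        calc p*q = (p*(b*q))*q := by rw [e1]
          _ = p*(b*(q*q)) := by simp only [mul_assoc]
          _ = p*(b*q) := by rw [hband]
          _ = p := e1)
    · -- (a*p)*(b*q) = b*q  ⇒ a*b = b
      have bqb : b*q*b = b := bandRect hband hb hq
      have e1 : a*p*b = b := by
        calc a*p*b = (a*p)*(b*q*b) := by rw [bqb]
          _ = ((a*p)*(b*q))*b := by simp only [mul_assoc]
          _ = (b*q)*b := by rw [h]
          _ = b := bqb
      exact hab (by
        calc a*b = a*(a*p*b) := by rw [e1]
          _ = ((a*a)*p)*b := by simp only [mul_assoc]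
          _ = a*p*b := by rw [hband]
          _ = b := e1)
    · -- (b*q)*(a*p) = a*p  ⇒ a*b = b
      have apa : a*p*a = a := bandRect hband ha hp
      have bab : b*a*b = b := bandRect hband hb ha
      have e1 : b*q*a = a := by
        calc b*q*a = (b*q)*(a*p*a) := by rw [apa]
          _ = ((b*q)*(a*p))*a := by simp only [mul_assoc]
          _ = (a*p)*a := by rw [h]
          _ = a := apa
      have e2 : b*a = a := by
        calc b*a = b*(b*q*a) := by rw [e1]
          _ = ((b*b)*q)*a := by simp only [mul_assoc]
          _ = b*q*a := by rw [hband]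
          _ = a := e1
      exact hab (by
        calc a*b = (b*a)*b := by rw [e2]
          _ = b := bab)
    · -- (b*q)*(a*p) = b*q  ⇒ p*q = p
      have qbq : q*b*q = q := bandRect hband hq hb
      have pqp : p*q*p = p := bandRect hband hp hq
      have e1 : q*a*p = q := by
        calc q*a*p = (q*b*q)*(a*p) := by rw [qbq, ← mul_assoc]
          _ = q*((b*q)*(a*p)) := by simp only [mul_assoc]
          _ = q*(b*q) := by rw [h]
          _ = q*b*q := (mul_assoc q b q).symm
          _ = q := qbq
      have e2 : q*p = q := by
        calc q*p = (q*a*p)*p := by rw [e1]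
          _ = (q*a)*(p*p) := by simp only [mul_assoc]
          _ = q*(a*p) := by rw [hband, mul_assoc]
          _ = q*a*p := (mul_assoc q a p).symm
          _ = q := e1
      exact hpq (by
        calc p*q = p*(q*p) := by rw [e2]
          _ = p*q*p := (mul_assoc p q p).symm
          _ = p := pqp)
end
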